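/- arXiv:2504.20881 — 5 statements merged into one kernel-verified Lean document; each statement's English description precedes it below -/
import Mathlib

section
/- Let φ : X → ℝ be continuous on X = 𝒜^(ℤ^d) and let β_c ∈ ℝ. Then φ has a freezing phase transition at β_c if and only if the pressure function p_φ is affine on [β_c, ∞) (i.e., there exist a, b ∈ ℝ with p_φ(β) = aβ + b for all β ≥ β_c) and p_φ is not affine on [β, ∞) for any β < β_c. Moreover, in this case p_φ(β) = s_φ β + h_φ for all β ≥ β_c. -/
open MeasureTheory Filter Topology
open scoped ENNReal Classical

namespace Freezing

/-- The configuration space `X = 𝒜^(ℤ^d)`. -/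
abbrev Cfg (d : ℕ) (A : Type) : Type := (Fin d → ℤ) → A

section Defs

variable {d : ℕ} {A : Type} [Fintype A] [TopologicalSpace A] [DiscreteTopology A]
  [MeasurableSpace A] [BorelSpace A]

/-- The shift action: `(σ^n x)_m = x_{n+m}`. -/
def shift (n : Fin d → ℤ) (x : Cfg d A) : Cfg d A := fun m => x (n + m)

/-- Shift-invariance of a measure. -/
def Invariant (μ : Measure (Cfg d A)) : Prop :=
  ∀ n : Fin d → ℤ, Measure.map (shift n) μ = μ

/-- Cylinder set `[w]` for a pattern `w` on `E_n = ([0,n-1] ∩ ℤ)^d`. -/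
def cylE (n : ℕ) (w : (Fin d → Fin n) → A) : Set (Cfg d A) :=
  { x | ∀ m : Fin d → Fin n, x (fun i => ((m i : ℕ) : ℤ)) = w m }

/-- Measure-theoretic entropy `h(μ) = inf_{n ≥ 1} n^{-d} Σ_w (-μ[w] log μ[w])`. -/
noncomputable def entropy (μ : Measure (Cfg d A)) : ℝ :=
  ⨅ n : {n : ℕ // 1 ≤ n},
    ((n.1 : ℝ) ^ d)⁻¹ *
      ∑ w : (Fin d → Fin n.1) → A, Real.negMulLog (μ (cylE n.1 w)).toReal

/-- Pressure `p_φ(β) = sup { h(μ) + β ∫ φ dμ }` over shift-invariant probability measures. -/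
noncomputable def pressure (φ : Cfg d A → ℝ) (β : ℝ) : ℝ :=
  sSup { r | ∃ μ : Measure (Cfg d A), IsProbabilityMeasure μ ∧ Invariant μ ∧
    r = entropy μ + β * ∫ x, φ x ∂μ }

/-- The set of equilibrium states of `βφ`. -/
def ES (φ : Cfg d A → ℝ) (β : ℝ) : Set (Measure (Cfg d A)) :=
  { μ | IsProbabilityMeasure μ ∧ Invariant μ ∧
      entropy μ + β * ∫ x, φ x ∂μ = pressure φ β }

/-- `φ` has a freezing phase transition at `βc`. -/
def FreezingPT (φ : Cfg d A → ℝ) (βc : ℝ) : Prop :=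
  (∀ β β' : ℝ, βc < β → βc < β' → ES φ β = ES φ β') ∧
  (∀ β β' : ℝ, β < βc → βc < β' → ES φ β ≠ ES φ β')

/-- `s_φ = sup { ∫ φ dμ }` over shift-invariant probability measures. -/
noncomputable def sPhi (φ : Cfg d A → ℝ) : ℝ :=
  sSup { r | ∃ μ : Measure (Cfg d A), IsProbabilityMeasure μ ∧ Invariant μ ∧
    r = ∫ x, φ x ∂μ }

/-- The set of maximizing measures of `φ`. -/
def MM (φ : Cfg d A → ℝ) : Set (Measure (Cfg d A)) :=
  { μ | IsProbabilityMeasure μ ∧ Invariant μ ∧ (∫ x, φ x ∂μ) = sPhi φ }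

/-- `h_φ = sup { h(η) : η ∈ MM(φ) }`. -/
noncomputable def hPhi (φ : Cfg d A → ℝ) : ℝ :=
  sSup { r | ∃ μ ∈ MM φ, r = entropy μ }

/-- The zero-temperature accumulation points of `φ`. -/
def ZTA (φ : Cfg d A → ℝ) : Set (Measure (Cfg d A)) :=
  { μ | IsProbabilityMeasure μ ∧ Invariant μ ∧
      ∃ (β : ℕ → ℝ) (μs : ℕ → Measure (Cfg d A)),
        Tendsto β atTop atTop ∧ (∀ k, μs k ∈ ES φ (β k)) ∧
        ∀ f : Cfg d A → ℝ, Continuous f →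
          Tendsto (fun k => ∫ x, f x ∂(μs k)) atTop (𝓝 (∫ x, f x ∂μ)) }

/-- A subshift: nonempty, closed, invariant under every shift. -/
def IsSubshift (X₀ : Set (Cfg d A)) : Prop :=
  X₀.Nonempty ∧ IsClosed X₀ ∧ ∀ n : Fin d → ℤ, ∀ x ∈ X₀, shift n x ∈ X₀

/-- The language `L_{E_n}(X₀)`: patterns on `E_n` appearing at the origin of points of `X₀`. -/
def langE (X₀ : Set (Cfg d A)) (n : ℕ) : Set ((Fin d → Fin n) → A) :=
  { w | ∃ x ∈ X₀, ∀ m : Fin d → Fin n, x (fun i => ((m i : ℕ) : ℤ)) = w m }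

/-- Topological entropy `h_top(X₀) = inf_{n ≥ 1} n^{-d} log |L_{E_n}(X₀)|`. -/
noncomputable def topEnt (X₀ : Set (Cfg d A)) : ℝ :=
  ⨅ n : {n : ℕ // 1 ≤ n}, ((n.1 : ℝ) ^ d)⁻¹ * Real.log ((langE X₀ n.1).ncard)

/-- A measure of maximal entropy on the subshift `X₀`. -/
def IsMME (X₀ : Set (Cfg d A)) (μ : Measure (Cfg d A)) : Prop :=
  IsProbabilityMeasure μ ∧ Invariant μ ∧ μ X₀ = 1 ∧ entropy μ = topEnt X₀

/-- Ergodicity: invariant Borel sets have measure `0` or `1`. -/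
def ErgodicInv (μ : Measure (Cfg d A)) : Prop :=
  ∀ s : Set (Cfg d A), MeasurableSet s → (∀ n : Fin d → ℤ, shift n ⁻¹' s = s) →
    μ s = 0 ∨ μ s = 1

/-- The `n`-th variation `var_n φ`, over pairs agreeing on `B_n = ([-n,n] ∩ ℤ)^d`. -/
noncomputable def varPot (φ : Cfg d A → ℝ) (n : ℕ) : ℝ :=
  sSup { r | ∃ x y : Cfg d A,
    (∀ m : Fin d → ℤ, (∀ i, |m i| ≤ (n : ℤ)) → x m = y m) ∧ r = |φ x - φ y| }

/-- Sup-norm `‖m‖_∞` of a site `m ∈ ℤ^d`. -/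
def supNorm (m : Fin d → ℤ) : ℕ := Finset.univ.sup fun i => (m i).natAbs

/-- The metric `dist(x,y) = 2^{-min{‖n‖_∞ : x_n ≠ y_n}}`. -/
noncomputable def cfgDist (x y : Cfg d A) : ℝ :=
  if x = y then 0
  else (2 : ℝ) ^
    (-((sInf { k : ℕ | ∃ m : Fin d → ℤ, supNorm m = k ∧ x m ≠ y m } : ℕ) : ℤ))

/-- Distance from a point to a subshift. -/
noncomputable def distToSub (X₀ : Set (Cfg d A)) (x : Cfg d A) : ℝ :=
  sInf { r | ∃ y ∈ X₀, r = cfgDist x y }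

end Defs

/-!
The pressure is the upper envelope of the lines `β ↦ h(μ) + β ∫ φ dμ`, `μ` shift-invariant, and
the equilibrium states are the measures whose line touches the envelope. Since the invariant
probability measures form a weak-* compact set on which entropy is upper semicontinuous, the
envelope is attained at every `β`.

A line below the envelope that touches an affine piece of it at an interior point has the same
slope and intercept, so on a half-line where the pressure is affine the equilibrium states do not
change; a measure that is an equilibrium state at two temperatures is one at every temperature in
between. Conversely, a common equilibrium state for all `β > β_c` gives a line equal to the
pressure on `(β_c, ∞)`, hence on `[β_c, ∞)`. Its slope dominates every other slope, so it is
`s_φ`, and its intercept is the largest entropy among maximizing measures, `h_φ`.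
-/

lemma le_of_eventually_mul_add_le {a b c e : ℝ}
    (hle : ∀ᶠ t in atTop, a * t + b ≤ c * t + e) : a ≤ c := by
  by_contra! hca
  have hgrow : Tendsto (fun t => (a - c) * t + (b - e)) atTop atTop :=
    tendsto_atTop_add_const_right _ _ (tendsto_id.const_mul_atTop (sub_pos.2 hca))
  obtain ⟨t, hpos, ht⟩ := ((hgrow.eventually_gt_atTop 0).and hle).exists
  nlinarith

section UpperEnvelope

variable {ι : Type*} (M : Set ι) (h s : ι → ℝ)

noncomputable def upperEnvelope (β : ℝ) : ℝ := sSup ((fun i => h i + β * s i) '' M)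

def maximizers (β : ℝ) : Set ι := {i ∈ M | h i + β * s i = upperEnvelope M h s β}

def AttainsMax : Prop := ∀ β, M.Nonempty → ∃ i ∈ M, IsMaxOn (fun j => h j + β * s j) M i

def AffineOnIci (f : ℝ → ℝ) (β₀ : ℝ) : Prop := ∃ a b : ℝ, ∀ β : ℝ, β₀ ≤ β → f β = a * β + b

def FreezesAt (E : ℝ → Set ι) (βc : ℝ) : Prop :=
  (∀ β β' : ℝ, βc < β → βc < β' → E β = E β') ∧
  (∀ β β' : ℝ, β < βc → βc < β' → E β ≠ E β')

variable {M h s}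

lemma upperEnvelope_of_empty (hM : M = ∅) (β : ℝ) : upperEnvelope M h s β = 0 := by
  simp [upperEnvelope, hM]

lemma maximizers_of_empty (hM : M = ∅) (β : ℝ) : maximizers M h s β = ∅ := by
  simp [maximizers, hM]

lemma affineOnIci_of_forall_mem_maximizers {i : ι} {β₀ : ℝ}
    (hi : ∀ t, β₀ ≤ t → i ∈ maximizers M h s t) : AffineOnIci (upperEnvelope M h s) β₀ :=
  ⟨s i, h i, fun t ht => by linarith [(hi t ht).2]⟩

lemma nonempty_of_freezesAt {βc : ℝ}
    (hfr : FreezesAt (maximizers M h s) βc) : M.Nonempty := by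
  refine Set.nonempty_iff_ne_empty.2 fun hM => ?_
  exact hfr.2 (βc - 1) (βc + 1) (by linarith) (by linarith) (by simp [maximizers_of_empty hM])

lemma nonempty_of_not_affineOnIci {β₀ : ℝ}
    (hna : ¬ AffineOnIci (upperEnvelope M h s) β₀) : M.Nonempty := by
  refine Set.nonempty_iff_ne_empty.2 fun hM => hna ⟨0, 0, fun t _ => ?_⟩
  simp [upperEnvelope_of_empty hM]

namespace AttainsMax

variable (hM : AttainsMax M h s)
include hM

lemma le_upperEnvelope {i : ι} (hi : i ∈ M) (β : ℝ) :
    h i + β * s i ≤ upperEnvelope M h s β := by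
  obtain ⟨k, -, hk⟩ := hM β ⟨i, hi⟩
  have hbdd : BddAbove ((fun j => h j + β * s j) '' M) := by
    refine ⟨h k + β * s k, ?_⟩
    rintro _ ⟨j, hj, rfl⟩
    exact hk hj
  exact le_csSup hbdd ⟨i, hi, rfl⟩

lemma nonempty_maximizers (hne : M.Nonempty) (β : ℝ) : (maximizers M h s β).Nonempty := by
  obtain ⟨i, hi, hmax⟩ := hM β hne
  refine ⟨i, hi, le_antisymm (hM.le_upperEnvelope hi β) (csSup_le ⟨_, i, hi, rfl⟩ ?_)⟩
  rintro _ ⟨j, hj, rfl⟩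
  exact hmax hj

lemma mem_maximizers_of_mem_Icc {i : ι} {β₁ β₂ t : ℝ} (h₁ : i ∈ maximizers M h s β₁)
    (h₂ : i ∈ maximizers M h s β₂) (ht : t ∈ Set.Icc β₁ β₂) : i ∈ maximizers M h s t := by
  refine ⟨h₁.1, le_antisymm (hM.le_upperEnvelope h₁.1 t) (csSup_le ⟨_, i, h₁.1, rfl⟩ ?_)⟩
  rintro _ ⟨j, hj, rfl⟩
  have hj₁ := h₁.2 ▸ hM.le_upperEnvelope hj β₁
  have hj₂ := h₂.2 ▸ hM.le_upperEnvelope hj β₂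
  rcases le_total (s j) (s i) with hs | hs <;> nlinarith [ht.1, ht.2]

lemma eq_of_mem_maximizers_of_affine {a b β₀ β : ℝ}
    (haff : ∀ t, β₀ ≤ t → upperEnvelope M h s t = a * t + b) (hβ : β₀ < β) {i : ι}
    (hi : i ∈ maximizers M h s β) : s i = a ∧ h i = b := by
  have hleft := haff β₀ le_rfl ▸ hM.le_upperEnvelope hi.1 β₀
  have hright := haff (2 * β - β₀) (by linarith) ▸ hM.le_upperEnvelope hi.1 (2 * β - β₀)
  have hmid := haff β hβ.le ▸ hi.2
  have hsi : s i = a := by nlinarith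
  exact ⟨hsi, by subst hsi; linarith⟩

lemma maximizers_eq_of_affine {a b β₀ β : ℝ}
    (haff : ∀ t, β₀ ≤ t → upperEnvelope M h s t = a * t + b) (hβ : β₀ < β) :
    maximizers M h s β = {i ∈ M | s i = a ∧ h i = b} := by
  ext i
  refine ⟨fun hi => ⟨hi.1, hM.eq_of_mem_maximizers_of_affine haff hβ hi⟩, ?_⟩
  rintro ⟨hi, rfl, rfl⟩
  exact ⟨hi, by rw [haff β hβ.le]; ring⟩

lemma exists_forall_mem_maximizers_of_freezesAt {βc : ℝ} (hne : M.Nonempty)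
    (hconst : ∀ β β', βc < β → βc < β' → maximizers M h s β = maximizers M h s β') :
    ∃ i, ∀ t, βc ≤ t → i ∈ maximizers M h s t := by
  obtain ⟨i, hi⟩ := hM.nonempty_maximizers hne (βc + 1)
  have hgt : ∀ t, βc < t → i ∈ maximizers M h s t := fun t ht =>
    hconst (βc + 1) t (by linarith) ht ▸ hi
  refine ⟨i, fun t ht => ?_⟩
  rcases ht.eq_or_lt.symm with hlt | rfl
  · exact hgt t hlt
  obtain ⟨j, hj⟩ := hM.nonempty_maximizers hne βc
  -- the line of `j` lies below that of `i` on `(βc, ∞)`, hence also at `βc`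
  have hji : h j + βc * s j ≤ h i + βc * s i := by
    refine le_on_closure (f := fun t => h j + t * s j) (g := fun t => h i + t * s i)
      (s := Set.Ioi βc) (fun t ht => (hgt t ht).2 ▸ hM.le_upperEnvelope hj.1 t)
      (by fun_prop) (by fun_prop) (by simp)
  exact ⟨hi.1, le_antisymm (hM.le_upperEnvelope hi.1 βc) (hj.2 ▸ hji)⟩

theorem freezesAt_iff (βc : ℝ) :
    FreezesAt (maximizers M h s) βc ↔
      AffineOnIci (upperEnvelope M h s) βc ∧
        ∀ β' < βc, ¬ AffineOnIci (upperEnvelope M h s) β' := by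
  constructor
  · intro hfr
    obtain ⟨i, hi⟩ :=
      hM.exists_forall_mem_maximizers_of_freezesAt (nonempty_of_freezesAt hfr) hfr.1
    refine ⟨affineOnIci_of_forall_mem_maximizers hi, fun β' hβ' ⟨a, b, haff⟩ => ?_⟩
    refine hfr.2 ((β' + βc) / 2) (βc + 1) (by linarith) (by linarith) ?_
    rw [hM.maximizers_eq_of_affine haff (by linarith),
      hM.maximizers_eq_of_affine haff (by linarith)]
  · rintro ⟨⟨a, b, haff⟩, hnot⟩
    refine ⟨fun β β' hβ hβ' => ?_, fun β β' hβ hβ' heq => hnot β hβ ?_⟩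
    · rw [hM.maximizers_eq_of_affine haff hβ, hM.maximizers_eq_of_affine haff hβ']
    obtain ⟨i, hi⟩ := hM.nonempty_maximizers (nonempty_of_not_affineOnIci (hnot β hβ)) β
    have hi' : i ∈ maximizers M h s β' := heq ▸ hi
    obtain ⟨rfl, rfl⟩ := hM.eq_of_mem_maximizers_of_affine haff hβ' hi'
    refine affineOnIci_of_forall_mem_maximizers (i := i) fun t ht => ?_
    rcases le_total t β' with htβ' | hβ't
    · exact hM.mem_maximizers_of_mem_Icc hi hi' ⟨ht, htβ'⟩
    · rw [hM.maximizers_eq_of_affine haff (by linarith)]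
      exact ⟨hi'.1, rfl, rfl⟩

theorem upperEnvelope_eq_of_freezesAt {βc : ℝ} (hfr : FreezesAt (maximizers M h s) βc) {β : ℝ}
    (hβ : βc ≤ β) :
    upperEnvelope M h s β = sSup (s '' M) * β + sSup (h '' {i ∈ M | s i = sSup (s '' M)}) := by
  obtain ⟨i, hi⟩ :=
    hM.exists_forall_mem_maximizers_of_freezesAt (nonempty_of_freezesAt hfr) hfr.1
  have hs : sSup (s '' M) = s i := by
    refine IsGreatest.csSup_eq ⟨⟨i, (hi βc le_rfl).1, rfl⟩, ?_⟩
    rintro _ ⟨j, hj, rfl⟩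
    refine le_of_eventually_mul_add_le (b := h j) (e := h i) ?_
    filter_upwards [eventually_ge_atTop βc] with t ht
    linarith [(hi t ht).2 ▸ hM.le_upperEnvelope hj t]
  have hh : sSup (h '' {j ∈ M | s j = sSup (s '' M)}) = h i := by
    refine IsGreatest.csSup_eq ⟨⟨i, ⟨(hi βc le_rfl).1, hs.symm⟩, rfl⟩, ?_⟩
    rintro _ ⟨j, ⟨hj, hsj⟩, rfl⟩
    have hle := (hi βc le_rfl).2 ▸ hM.le_upperEnvelope hj βc
    rw [hsj, hs] at hle
    linarith
  rw [hh, hs]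
  linarith [(hi β hβ).2]

end AttainsMax

end UpperEnvelope

section Pressure

variable {d : ℕ} {A : Type}

def invariantProbMeasures [MeasurableSpace A] : Set (Measure (Cfg d A)) :=
  {μ | IsProbabilityMeasure μ ∧ Invariant μ}

lemma pressure_eq_upperEnvelope [Fintype A] [MeasurableSpace A] (φ : Cfg d A → ℝ) :
    pressure φ = upperEnvelope invariantProbMeasures entropy fun μ => ∫ x, φ x ∂μ := by
  funext β
  simp only [pressure, upperEnvelope, invariantProbMeasures, Set.image, Set.mem_ofPred_eq,
    and_assoc, eq_comm]

lemma ES_eq_maximizers [Fintype A] [MeasurableSpace A] (φ : Cfg d A → ℝ) :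
    ES φ = maximizers invariantProbMeasures entropy fun μ => ∫ x, φ x ∂μ := by
  funext β
  simp only [ES, maximizers, invariantProbMeasures, pressure_eq_upperEnvelope, Set.mem_ofPred_eq,
    and_assoc]

lemma sPhi_eq [MeasurableSpace A] (φ : Cfg d A → ℝ) :
    sPhi φ = sSup ((fun μ => ∫ x, φ x ∂μ) '' invariantProbMeasures) := by
  simp only [sPhi, invariantProbMeasures, Set.image, Set.mem_ofPred_eq, and_assoc, eq_comm]

lemma hPhi_eq [Fintype A] [MeasurableSpace A] (φ : Cfg d A → ℝ) :
    hPhi φ = sSup (entropy '' {μ ∈ invariantProbMeasures | ∫ x, φ x ∂μ = sPhi φ}) := by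
  simp only [hPhi, MM, invariantProbMeasures, Set.image, Set.mem_ofPred_eq, and_assoc, eq_comm]

lemma continuous_shift [TopologicalSpace A] (n : Fin d → ℤ) :
    Continuous (shift n : Cfg d A → Cfg d A) :=
  continuous_pi fun _ => continuous_apply _

lemma isClopen_cylE [TopologicalSpace A] [DiscreteTopology A] (n : ℕ) (w : (Fin d → Fin n) → A) :
    IsClopen (cylE n w) := by
  have : cylE n w = ⋂ m, (fun x : Cfg d A => x fun i => ((m i : ℕ) : ℤ)) ⁻¹' {w m} := by
    ext
    simp [cylE]
  rw [this]
  exact isClopen_iInter_of_finite fun m => (isClopen_discrete _).preimage (continuous_apply _)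

variable [Fintype A] [TopologicalSpace A] [DiscreteTopology A] [MeasurableSpace A] [BorelSpace A]

lemma isClosed_setOf_invariant :
    IsClosed {ν : ProbabilityMeasure (Cfg d A) | Invariant (ν : Measure (Cfg d A))} := by
  have : {ν : ProbabilityMeasure (Cfg d A) | Invariant (ν : Measure (Cfg d A))} =
      ⋂ n, {ν | ν.map (continuous_shift n).measurable.aemeasurable = ν} := by
    ext ν
    simp [Invariant, ← ProbabilityMeasure.toMeasure_injective.eq_iff]
  rw [this]
  exact isClosed_iInter fun n =>
    isClosed_eq (ProbabilityMeasure.continuous_map (continuous_shift n)) continuous_id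

lemma continuous_measure_cylE (n : ℕ) (w : (Fin d → Fin n) → A) :
    Continuous fun ν : ProbabilityMeasure (Cfg d A) =>
      ((ν : Measure (Cfg d A)) (cylE n w)).toReal := by
  refine continuous_iff_continuousAt.2 fun ν => ?_
  exact (NNReal.continuous_coe.tendsto _).comp
    (ProbabilityMeasure.tendsto_measure_of_isClopen_of_tendsto tendsto_id (isClopen_cylE n w))

lemma upperSemicontinuous_entropy :
    UpperSemicontinuous fun ν : ProbabilityMeasure (Cfg d A) =>
      entropy (ν : Measure (Cfg d A)) := by
  refine upperSemicontinuous_ciInf (fun ν => ⟨0, ?_⟩) fun n => Continuous.upperSemicontinuous ?_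
  · rintro _ ⟨n, rfl⟩
    refine mul_nonneg (by positivity) (Finset.sum_nonneg fun w _ => ?_)
    exact Real.negMulLog_nonneg ENNReal.toReal_nonneg
      (ENNReal.toReal_le_of_le_ofReal zero_le_one (by simpa using prob_le_one))
  · exact continuous_const.mul (continuous_finsetSum _ fun w _ =>
      Real.continuous_negMulLog.comp (continuous_measure_cylE _ w))

theorem attainsMax_invariantProbMeasures {φ : Cfg d A → ℝ} (hφ : Continuous φ) :
    AttainsMax invariantProbMeasures entropy fun μ : Measure (Cfg d A) => ∫ x, φ x ∂μ := by
  rintro β ⟨μ₀, hμ₀, hinv₀⟩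
  have husc : UpperSemicontinuous fun ν : ProbabilityMeasure (Cfg d A) =>
      entropy (ν : Measure (Cfg d A)) + β * ∫ x, φ x ∂(ν : Measure (Cfg d A)) :=
    upperSemicontinuous_entropy.add (continuous_const.mul
      (ProbabilityMeasure.continuous_integral_continuousMap
        (⟨φ, hφ⟩ : C(Cfg d A, ℝ)))).upperSemicontinuous
  let K := {ν : ProbabilityMeasure (Cfg d A) | Invariant (ν : Measure (Cfg d A))}
  have hne : K.Nonempty := ⟨⟨μ₀, hμ₀⟩, hinv₀⟩
  obtain ⟨ν, hν, hmax⟩ :=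
    (husc.upperSemicontinuousOn K).exists_isMaxOn hne isClosed_setOf_invariant.isCompact
  exact ⟨ν, ⟨ν.2, hν⟩, fun μ hμ => @hmax ⟨μ, hμ.1⟩ hμ.2⟩

end Pressure

theorem statement3_general (d : ℕ) (A : Type) [Fintype A] [TopologicalSpace A]
    [DiscreteTopology A] [MeasurableSpace A] [BorelSpace A]
    (φ : Cfg d A → ℝ) (hφ : Continuous φ) (βc : ℝ) :
    (FreezingPT φ βc ↔
      ((∃ a b : ℝ, ∀ β : ℝ, βc ≤ β → pressure φ β = a * β + b) ∧
        ∀ β' : ℝ, β' < βc →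
          ¬ ∃ a b : ℝ, ∀ β : ℝ, β' ≤ β → pressure φ β = a * β + b)) ∧
    (FreezingPT φ βc → ∀ β : ℝ, βc ≤ β → pressure φ β = sPhi φ * β + hPhi φ) := by
  have hM := attainsMax_invariantProbMeasures hφ
  rw [show FreezingPT φ βc ↔ FreezesAt (ES φ) βc from Iff.rfl, ES_eq_maximizers,
    pressure_eq_upperEnvelope, hPhi_eq, sPhi_eq]
  exact ⟨hM.freezesAt_iff βc, fun hfz β hβ => hM.upperEnvelope_eq_of_freezesAt hfz hβ⟩

/-- `φ` has a freezing phase transition at `β_c` iff the pressure function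
is affine on `[β_c, ∞)` and on no larger half-line `[β, ∞)` with `β < β_c`; and in that case
`p_φ(β) = s_φ β + h_φ` for all `β ≥ β_c`. -/
theorem statement3 (d : ℕ) (hd : 1 ≤ d) (A : Type) [Fintype A] [TopologicalSpace A]
    [DiscreteTopology A] [MeasurableSpace A] [BorelSpace A]
    (φ : Cfg d A → ℝ) (hφ : Continuous φ) (βc : ℝ) :
    (FreezingPT φ βc ↔
      ((∃ a b : ℝ, ∀ β : ℝ, βc ≤ β → pressure φ β = a * β + b) ∧
        ∀ β' : ℝ, β' < βc →
          ¬ ∃ a b : ℝ, ∀ β : ℝ, β' ≤ β → pressure φ β = a * β + b)) ∧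
    (FreezingPT φ βc → ∀ β : ℝ, βc ≤ β → pressure φ β = sPhi φ * β + hPhi φ) :=
  statement3_general d A φ hφ βc

end Freezing
end

section
/- Let X₀ be a proper subshift of X = 𝒜^(ℤ^d), let μ be an ergodic shift-invariant Borel probability measure on X with μ(X₀) = 0, and let μ̄ be a Borel probability measure on X × Y that is invariant and ergodic for the product ℤ^d-action T^j(x,y) = (σ^j x, T^j y) and whose marginals are μ on X and ν on Y. Then for μ̄-almost every (x, y), the following hold for every j ∈ ℤ^d: (i) the set N(x,y,j) = { n ≥ 0 : x|_{S_n(j,y)} ∈ L(X₀) } is finite; (ii) setting n(j) = max N(x,y,j) if N(x,y,j) ≠ ∅ and n(j) = 0 otherwise, the sets S_{n(j)}(j, y) (j ∈ ℤ^d) form a partition of ℤ^d, i.e., k ∈ S_{n(j)}(j, y) implies S_{n(k)}(k, y) = S_{n(j)}(j, y); (iii) if n(j) > 0 then x|_{S_{n(j)}(j,y)} ∈ L(X₀); (iv) x|_{S_{n(j)+1}(j,y)} ∉ L(X₀). -/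
open MeasureTheory Filter Topology
open scoped ENNReal Classical

namespace Freezing

section Odometer

/-- The dyadic odometer `ι` on `Σ = {0,1}^ℕ`: binary addition of `1` with carry to the left
(the bit at `n` flips exactly when all lower bits equal `1`); the all-ones sequence is sent to
the all-zeros sequence. -/
def iota (y : ℕ → Bool) : ℕ → Bool :=
  fun n => xor (y n) (decide (∀ k < n, y k = true))

/-- The inverse of the dyadic odometer: binary subtraction of `1` with borrow (the bit at `n`
flips exactly when all lower bits equal `0`); the all-zeros sequence is sent to the all-ones
sequence. -/
def iotaInv (y : ℕ → Bool) : ℕ → Bool :=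
  fun n => xor (y n) (decide (∀ k < n, y k = false))

/-- The iterate `ι^i` of the odometer, for `i ∈ ℤ` (using that `iotaInv` is the inverse
bijection of `iota`). -/
def odoIter (i : ℤ) (y : ℕ → Bool) : ℕ → Bool :=
  if 0 ≤ i then iota^[i.toNat] y else iotaInv^[(-i).toNat] y

/-- The relation `i ∼_{n,y} k`: the sequences `ι^i(y)` and `ι^k(y)` agree in all coordinates
at level `n` and above. -/
def simRel (n : ℕ) (y : ℕ → Bool) (i k : ℤ) : Prop :=
  ∀ m : ℕ, n ≤ m → odoIter i y m = odoIter k y m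

/-- The `ℤ^d`-dyadic odometer space `Y = Σ^d`. -/
abbrev OdoY (d : ℕ) : Type := Fin d → ℕ → Bool

/-- The `ℤ^d`-action on `Y`: `T^j(y₁,…,y_d) = (ι^{j₁}(y₁),…,ι^{j_d}(y_d))`. -/
def odoAct {d : ℕ} (j : Fin d → ℤ) (y : OdoY d) : OdoY d := fun i => odoIter (j i) (y i)

/-- The dyadic tile `S_n(j,y) = { k ∈ ℤ^d : j_i ∼_{n,y_i} k_i for each i }`. -/
def dyadicTile {d : ℕ} (n : ℕ) (j : Fin d → ℤ) (y : OdoY d) : Set (Fin d → ℤ) :=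
  { k | ∀ i : Fin d, simRel n (y i) (j i) (k i) }

end Odometer

section Language

variable {d : ℕ} {A : Type} [Fintype A] [TopologicalSpace A] [DiscreteTopology A]
  [MeasurableSpace A] [BorelSpace A]

/-- `x|_S` belongs to the language of `X₀`: the pattern of `x` on `S` appears (somewhere) in
some point of `X₀`. -/
def InLang (X₀ : Set (Cfg d A)) (S : Set (Fin d → ℤ)) (x : Cfg d A) : Prop :=
  ∃ z ∈ X₀, ∃ m₀ : Fin d → ℤ, ∀ m ∈ S, x m = z (m + m₀)

/-- `n^{(x,y)}(j)`: the largest `n` such that `x` restricted to the dyadic tile `S_n(j,y)`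
belongs to the language of `X₀` (and `0` if there is no such `n`). -/
noncomputable def maxTileLevel (X₀ : Set (Cfg d A)) (x : Cfg d A) (y : OdoY d)
    (j : Fin d → ℤ) : ℕ :=
  sSup { n : ℕ | InLang X₀ (dyadicTile n j y) x }

end Language

/-!
For `ν`-almost every `y`, each coordinate `y_i` contains infinitely many `0`s and `1`s. Then
every iterate `ι^t(y_i)` differs from `y_i` in finitely many places only (a carry or borrow stops
at the first `0` or `1`), so any two sites lie in a common dyadic tile `S_n(j,y)` once `n` is
large: the tiles exhaust `ℤ^d`. For `μ`-almost every `x` we have `x ∉ X₀`. Since the language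
condition is inherited by subtiles, infinitely many good levels would mean all levels are good,
and then shifts of points of `X₀` agreeing with `x` on ever larger tiles converge to `x`, which
would lie in the closed set `X₀`. So the good levels form a finite initial segment of `ℕ`, `n(j)`
is its maximum, and for `k ∈ S_{n(j)}(j,y)` the tiles at `j` and `k` coincide from level `n(j)`
on, which forces `n(k) = n(j)`.
-/

def IsRegularBits (w : ℕ → Bool) : Prop := ∀ b : Bool, ∃ᶠ k in atTop, w k = b

lemma xor_decide_forall_lt_eventuallyEq {w : ℕ → Bool} {b : Bool} {n₀ : ℕ} (h : w n₀ ≠ b) :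
    (fun n => xor (w n) (decide (∀ k < n, w k = b))) =ᶠ[atTop] w := by
  filter_upwards [eventually_gt_atTop n₀] with n hn
  rw [decide_eq_false fun H => h (H n₀ hn), Bool.xor_false]

namespace IsRegularBits

variable {w : ℕ → Bool}

lemma congr {v : ℕ → Bool} (hw : IsRegularBits w) (h : v =ᶠ[atTop] w) : IsRegularBits v :=
  fun b => ((hw b).and_eventually h).mono fun _ ⟨hk, he⟩ => he.trans hk

lemma iterate_eventuallyEq {f : (ℕ → Bool) → ℕ → Bool}
    (hf : ∀ v, IsRegularBits v → f v =ᶠ[atTop] v) (hw : IsRegularBits w) (t : ℕ) :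
    f^[t] w =ᶠ[atTop] w := by
  induction t with
  | zero => rfl
  | succ t ih =>
    rw [Function.iterate_succ_apply']
    exact (hf _ (hw.congr ih)).trans ih

lemma iota_eventuallyEq (hw : IsRegularBits w) : iota w =ᶠ[atTop] w :=
  let ⟨n₀, h⟩ := (hw false).exists
  xor_decide_forall_lt_eventuallyEq (b := true) (n₀ := n₀) (by simp [h])

lemma iotaInv_eventuallyEq (hw : IsRegularBits w) : iotaInv w =ᶠ[atTop] w :=
  let ⟨n₀, h⟩ := (hw true).exists
  xor_decide_forall_lt_eventuallyEq (b := false) (n₀ := n₀) (by simp [h])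

lemma odoIter_eventuallyEq (hw : IsRegularBits w) (i : ℤ) : odoIter i w =ᶠ[atTop] w := by
  unfold odoIter
  split_ifs
  exacts [hw.iterate_eventuallyEq (fun _ => iota_eventuallyEq) _,
    hw.iterate_eventuallyEq (fun _ => iotaInv_eventuallyEq) _]

lemma eventually_simRel (hw : IsRegularBits w) (i k : ℤ) : ∀ᶠ n in atTop, simRel n w i k := by
  obtain ⟨n, hn⟩ :=
    eventually_atTop.1 ((hw.odoIter_eventuallyEq i).trans (hw.odoIter_eventuallyEq k).symm)
  exact eventually_atTop.2 ⟨n, fun n' hn' m hm => hn m (hn'.trans hm)⟩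

end IsRegularBits

section DyadicTile

variable {d : ℕ}

lemma dyadicTile_mono {n n' : ℕ} (hn : n ≤ n') (j : Fin d → ℤ) (y : OdoY d) :
    dyadicTile n j y ⊆ dyadicTile n' j y :=
  fun _ hk i m hm => hk i m (hn.trans hm)

lemma dyadicTile_eq_of_mem {n n' : ℕ} (hn : n ≤ n') {j k : Fin d → ℤ} {y : OdoY d}
    (hk : k ∈ dyadicTile n j y) : dyadicTile n' k y = dyadicTile n' j y := by
  ext l
  refine forall_congr' fun i => ⟨fun h m hm => ?_, fun h m hm => ?_⟩
  · exact (hk i m (hn.trans hm)).trans (h m hm)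
  · exact (hk i m (hn.trans hm)).symm.trans (h m hm)

lemma eventually_mem_dyadicTile {y : OdoY d} (hy : ∀ i, IsRegularBits (y i))
    (j k : Fin d → ℤ) :
    ∀ᶠ n in atTop, k ∈ dyadicTile n j y :=
  eventually_all.2 fun i => (hy i).eventually_simRel (j i) (k i)

end DyadicTile

lemma sSup_eq_of_forall_sSup_le_mem_iff {s t : Set ℕ} (hs : BddAbove s)
    (h : ∀ n, sSup s ≤ n → (n ∈ t ↔ n ∈ s)) : sSup t = sSup s := by
  rcases s.eq_empty_or_nonempty with rfl | hne
  · rw [Set.eq_empty_of_forall_notMem fun n hn => (h n (by simp)).1 hn]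
  · refine IsGreatest.csSup_eq ⟨(h _ le_rfl).2 (Nat.sSup_mem hne hs), fun n hn => ?_⟩
    by_contra hlt
    exact hlt (le_csSup hs ((h n (not_le.1 hlt).le).1 hn))

section Language

variable {d : ℕ} {A : Type} {X₀ : Set (Cfg d A)} {x : Cfg d A}

lemma InLang.mono {S T : Set (Fin d → ℤ)} (hST : S ⊆ T) (h : InLang X₀ T x) :
    InLang X₀ S x :=
  let ⟨z, hz, m₀, hm⟩ := h
  ⟨z, hz, m₀, fun m hm' => hm m (hST hm')⟩

lemma IsSubshift.mem_of_forall_inLang [TopologicalSpace A] (hX₀ : IsSubshift X₀)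
    {S : ℕ → Set (Fin d → ℤ)} (hS : ∀ k, ∀ᶠ n in atTop, k ∈ S n)
    (hx : ∀ n, InLang X₀ (S n) x) : x ∈ X₀ := by
  choose z hz m₀ hm using hx
  refine hX₀.2.1.mem_of_tendsto (b := atTop) (f := fun n => shift (m₀ n) (z n)) ?_
    (Eventually.of_forall fun n => hX₀.2.2 _ _ (hz n))
  refine tendsto_pi_nhds.2 fun k => tendsto_nhds_of_eventually_eq ?_
  filter_upwards [hS k] with n hn
  rw [shift, add_comm]
  exact (hm n k hn).symm

lemma IsSubshift.finite_setOf_inLang_dyadicTile [TopologicalSpace A] (hX₀ : IsSubshift X₀)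
    (hx : x ∉ X₀) {y : OdoY d} (hy : ∀ i, IsRegularBits (y i)) (j : Fin d → ℤ) :
    { n : ℕ | InLang X₀ (dyadicTile n j y) x }.Finite := by
  by_contra hinf
  refine hx (hX₀.mem_of_forall_inLang (eventually_mem_dyadicTile hy j) fun n => ?_)
  obtain ⟨n', hn', hlt⟩ := Set.Infinite.exists_gt hinf n
  exact InLang.mono (dyadicTile_mono hlt.le j y) hn'

variable {y : OdoY d} {j : Fin d → ℤ}

lemma inLang_maxTileLevel (hfin : { n : ℕ | InLang X₀ (dyadicTile n j y) x }.Finite)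
    (hpos : 0 < maxTileLevel X₀ x y j) :
    InLang X₀ (dyadicTile (maxTileLevel X₀ x y j) j y) x :=
  Nat.sSup_mem (Set.nonempty_iff_ne_empty.2 <| by rintro h; simp [maxTileLevel, h] at hpos)
    hfin.bddAbove

lemma not_inLang_maxTileLevel_add_one
    (hfin : { n : ℕ | InLang X₀ (dyadicTile n j y) x }.Finite) :
    ¬ InLang X₀ (dyadicTile (maxTileLevel X₀ x y j + 1) j y) x :=
  fun h => Nat.not_succ_le_self _ (le_csSup hfin.bddAbove h)

lemma maxTileLevel_eq_of_mem (hfin : { n : ℕ | InLang X₀ (dyadicTile n j y) x }.Finite)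
    {k : Fin d → ℤ} (hk : k ∈ dyadicTile (maxTileLevel X₀ x y j) j y) :
    maxTileLevel X₀ x y k = maxTileLevel X₀ x y j :=
  sSup_eq_of_forall_sSup_le_mem_iff hfin.bddAbove fun _ hn =>
    Iff.of_eq (congrArg (InLang X₀ · x) (dyadicTile_eq_of_mem hn hk))

end Language

lemma measure_setOf_forall_ge_eq_eq_zero {d : ℕ} {ν : Measure (OdoY d)}
    (hν : ∀ (F : Finset (Fin d × ℕ)) (b : Fin d × ℕ → Bool),
      ν { y : OdoY d | ∀ p ∈ F, y p.1 p.2 = b p } = (1 / 2 : ℝ≥0∞) ^ F.card)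
    (i : Fin d) (n : ℕ) (c : Bool) : ν { y : OdoY d | ∀ k, n ≤ k → y i k = c } = 0 := by
  have hhalf : Tendsto (fun m : ℕ => (1 / 2 : ℝ≥0∞) ^ m) atTop (𝓝 0) :=
    ENNReal.tendsto_pow_atTop_nhds_zero_of_lt_one (by norm_num)
  refine nonpos_iff_eq_zero.1 (ge_of_tendsto' hhalf fun m => ?_)
  let F : Finset (Fin d × ℕ) :=
    (Finset.range m).map ⟨fun t => (i, n + t), fun a b h => by simpa using h⟩
  calc ν { y : OdoY d | ∀ k, n ≤ k → y i k = c }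
      ≤ ν { y : OdoY d | ∀ p ∈ F, y p.1 p.2 = c } := measure_mono fun y hy p hp => by
        obtain ⟨t, -, rfl⟩ := Finset.mem_map.1 hp
        exact hy _ (Nat.le_add_right n t)
    _ = (1 / 2) ^ m := by rw [hν F fun _ => c, Finset.card_map, Finset.card_range]

lemma ae_isRegularBits {d : ℕ} {ν : Measure (OdoY d)}
    (hν : ∀ (F : Finset (Fin d × ℕ)) (b : Fin d × ℕ → Bool),
      ν { y : OdoY d | ∀ p ∈ F, y p.1 p.2 = b p } = (1 / 2 : ℝ≥0∞) ^ F.card) :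
    ∀ᵐ y ∂ν, ∀ i, IsRegularBits (y i) := by
  refine ae_all_iff.2 fun i => ae_all_iff.2 fun b =>
    ae_iff.2 <| measure_mono_null (fun y hy => ?_) (measure_iUnion_null fun n =>
      measure_setOf_forall_ge_eq_eq_zero hν i n (!b))
  obtain ⟨n, hn⟩ := eventually_atTop.1 (not_frequently.1 hy)
  exact Set.mem_iUnion.2 ⟨n, fun k hk => Bool.eq_not_iff.2 (hn k hk)⟩

theorem dyadicTiling_of_notMem {d : ℕ} {A : Type} [TopologicalSpace A] {X₀ : Set (Cfg d A)}
    (hX₀ : IsSubshift X₀) {x : Cfg d A} (hx : x ∉ X₀) {y : OdoY d}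
    (hy : ∀ i, IsRegularBits (y i)) (j : Fin d → ℤ) :
    { n : ℕ | InLang X₀ (dyadicTile n j y) x }.Finite ∧
    (∀ k ∈ dyadicTile (maxTileLevel X₀ x y j) j y,
      dyadicTile (maxTileLevel X₀ x y k) k y = dyadicTile (maxTileLevel X₀ x y j) j y) ∧
    (0 < maxTileLevel X₀ x y j → InLang X₀ (dyadicTile (maxTileLevel X₀ x y j) j y) x) ∧
    ¬ InLang X₀ (dyadicTile (maxTileLevel X₀ x y j + 1) j y) x :=
  have hfin := hX₀.finite_setOf_inLang_dyadicTile hx hy j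
  ⟨hfin, fun _ hk => by rw [maxTileLevel_eq_of_mem hfin hk, dyadicTile_eq_of_mem le_rfl hk],
    inLang_maxTileLevel hfin, not_inLang_maxTileLevel_add_one hfin⟩

theorem statement7_general (d : ℕ) (A : Type) [TopologicalSpace A]
    [MeasurableSpace A]
    (X₀ : Set (Cfg d A)) (hsub : IsSubshift X₀)
    (μ : Measure (Cfg d A)) (hμ0 : μ X₀ = 0)
    (ν : Measure (OdoY d))
    (hν : ∀ (F : Finset (Fin d × ℕ)) (b : Fin d × ℕ → Bool),
      ν { y : OdoY d | ∀ p ∈ F, y p.1 p.2 = b p } = (1 / 2 : ℝ≥0∞) ^ F.card)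
    (μbar : Measure (Cfg d A × OdoY d))
    (hfst : Measure.map Prod.fst μbar = μ) (hsnd : Measure.map Prod.snd μbar = ν) :
    ∀ᵐ p ∂μbar, ∀ j : Fin d → ℤ,
      { n : ℕ | InLang X₀ (dyadicTile n j p.2) p.1 }.Finite ∧
      (∀ k ∈ dyadicTile (maxTileLevel X₀ p.1 p.2 j) j p.2,
        dyadicTile (maxTileLevel X₀ p.1 p.2 k) k p.2 =
          dyadicTile (maxTileLevel X₀ p.1 p.2 j) j p.2) ∧
      (0 < maxTileLevel X₀ p.1 p.2 j →
        InLang X₀ (dyadicTile (maxTileLevel X₀ p.1 p.2 j) j p.2) p.1) ∧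
      ¬ InLang X₀ (dyadicTile (maxTileLevel X₀ p.1 p.2 j + 1) j p.2) p.1 := by
  have hx : ∀ᵐ p ∂μbar, p.1 ∉ X₀ :=
    ae_of_ae_map measurable_fst.aemeasurable (hfst ▸ measure_eq_zero_iff_ae_notMem.1 hμ0)
  have hy : ∀ᵐ p ∂μbar, ∀ i, IsRegularBits (p.2 i) :=
    ae_of_ae_map measurable_snd.aemeasurable (hsnd ▸ ae_isRegularBits hν)
  filter_upwards [hx, hy] with p hp₁ hp₂ j
  exact dyadicTiling_of_notMem hsub hp₁ hp₂ j

/-- **Dyadic Tiling Lemma.** Let `X₀` be a proper subshift, `μ` an ergodic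
shift-invariant measure with `μ(X₀) = 0`, `ν` the uniform Bernoulli measure on the dyadic
`ℤ^d`-odometer `Y`, and `μ̄` an ergodic joining of `μ` and `ν`. Then for `μ̄`-a.e. `(x,y)` and
every `j ∈ ℤ^d`: the set of levels `n` with `x|_{S_n(j,y)} ∈ L(X₀)` is finite; the maximal
dyadic tiles form a partition of `ℤ^d`; each tile of positive level carries a pattern in the
language of `X₀`; and the next larger dyadic tile does not. -/
theorem statement7 (d : ℕ) (hd : 1 ≤ d) (A : Type) [Fintype A] [TopologicalSpace A]
    [DiscreteTopology A] [MeasurableSpace A] [BorelSpace A]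
    (X₀ : Set (Cfg d A)) (hsub : IsSubshift X₀) (hproper : X₀ ≠ Set.univ)
    (μ : Measure (Cfg d A)) (hμp : IsProbabilityMeasure μ) (hμinv : Invariant μ)
    (hμerg : ErgodicInv μ) (hμ0 : μ X₀ = 0)
    (ν : Measure (OdoY d)) (hνp : IsProbabilityMeasure ν)
    (hν : ∀ (F : Finset (Fin d × ℕ)) (b : Fin d × ℕ → Bool),
      ν { y : OdoY d | ∀ p ∈ F, y p.1 p.2 = b p } = (1 / 2 : ℝ≥0∞) ^ F.card)
    (μbar : Measure (Cfg d A × OdoY d)) (hbarp : IsProbabilityMeasure μbar)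
    (hbarinv : ∀ j : Fin d → ℤ,
      Measure.map (fun p : Cfg d A × OdoY d => (shift j p.1, odoAct j p.2)) μbar = μbar)
    (hbarerg : ∀ s : Set (Cfg d A × OdoY d), MeasurableSet s →
      (∀ j : Fin d → ℤ,
        (fun p : Cfg d A × OdoY d => (shift j p.1, odoAct j p.2)) ⁻¹' s = s) →
      μbar s = 0 ∨ μbar s = 1)
    (hfst : Measure.map Prod.fst μbar = μ) (hsnd : Measure.map Prod.snd μbar = ν) :
    ∀ᵐ p ∂μbar, ∀ j : Fin d → ℤ,
      { n : ℕ | InLang X₀ (dyadicTile n j p.2) p.1 }.Finite ∧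
      (∀ k ∈ dyadicTile (maxTileLevel X₀ p.1 p.2 j) j p.2,
        dyadicTile (maxTileLevel X₀ p.1 p.2 k) k p.2 =
          dyadicTile (maxTileLevel X₀ p.1 p.2 j) j p.2) ∧
      (0 < maxTileLevel X₀ p.1 p.2 j →
        InLang X₀ (dyadicTile (maxTileLevel X₀ p.1 p.2 j) j p.2) p.1) ∧
      ¬ InLang X₀ (dyadicTile (maxTileLevel X₀ p.1 p.2 j + 1) j p.2) p.1 :=
  statement7_general d A X₀ hsub μ hμ0 ν hν μbar hfst hsnd

end Freezing
end

section
/- Let d ≥ 1, let m₁,…,m_d ≥ 2 be integers, set m = min_i m_i and Q = log(m₁⋯m_d)/log m, and let 𝒜 be a finite alphabet. Let S assign to each a ∈ 𝒜 a pattern S(a) : ∏_i {0,…,m_i−1} → 𝒜, and define the k-fold substitutions S^k(a) : ∏_i {0,…,m_i^k−1} → 𝒜 by S^0(a) = a and S^{k+1}(a)(j₁ m₁^k + s₁, …, j_d m_d^k + s_d) = S^k(S(a)(j₁,…,j_d))(s₁,…,s_d) for j ∈ ∏_i{0,…,m_i−1} and s ∈ ∏_i{0,…,m_i^k−1}. Suppose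 X₀ ⊆ 𝒜^(ℤ^d) is a subshift with the hierarchical property: for every x ∈ X₀ and every k ≥ 0 there exist y ∈ 𝒜^(ℤ^d) and o ∈ ℤ^d with 0 ≤ o_i < m_i^k such that x_{o + (j₁ m₁^k, …, j_d m_d^k) + s} = S^k(y_j)(s) for all j ∈ ℤ^d and all s ∈ ∏_i{0,…,m_i^k−1}. Then for every n ≥ 1, |L_{E_n}(X₀)| ≤ |𝒜|^{2^d} · (m·n)^Q. -/
open MeasureTheory Filter Topology
open scoped ENNReal Classical

namespace Freezing

section Substitution

variable {d : ℕ} {A : Type}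

/-- The `k`-fold substitution: `S^0(a) = a` and
`S^{k+1}(a)(j·m^k + s) = S^k(S(a)(j))(s)`, written via div/mod on coordinates. -/
def subIter (m : Fin d → ℕ) (Sb : A → (Fin d → ℕ) → A) : ℕ → A → (Fin d → ℕ) → A
  | 0 => fun a _ => a
  | (k + 1) => fun a t =>
      subIter m Sb k (Sb a fun i => t i / (m i) ^ k) (fun i => t i % (m i) ^ k)

end Substitution

/-- **word-complexity bound for constant-box substitution shifts.** If every
point of the subshift `X₀` is, for every `k`, a decoration of a grid of `k`-fold substitution
boxes, then `|L_{E_n}(X₀)| ≤ |𝒜|^{2^d} (m n)^Q` where `m = min_i m_i` and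
`Q = log(m₁⋯m_d)/log m`. -/
theorem statement8 (d : ℕ) (hd : 1 ≤ d) (A : Type) [Fintype A] [TopologicalSpace A]
    [DiscreteTopology A] [MeasurableSpace A] [BorelSpace A]
    (m : Fin d → ℕ) (hm : ∀ i, 2 ≤ m i)
    (m0 : ℕ) (hm0 : IsLeast (Set.range m) m0)
    (Sb : A → (Fin d → ℕ) → A)
    (X₀ : Set (Cfg d A)) (hsub : IsSubshift X₀)
    (hhier : ∀ x ∈ X₀, ∀ k : ℕ, ∃ (y : Cfg d A) (o : Fin d → ℤ),
      (∀ i, 0 ≤ o i ∧ o i < (m i : ℤ) ^ k) ∧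
      ∀ (j : Fin d → ℤ) (s : Fin d → ℕ), (∀ i, s i < (m i) ^ k) →
        x (fun i => o i + j i * (m i : ℤ) ^ k + (s i : ℤ)) = subIter m Sb k (y j) s) :
    ∀ n : ℕ, 1 ≤ n →
      ((langE X₀ n).ncard : ℝ) ≤
        (Fintype.card A : ℝ) ^ (2 ^ d) *
          (((m0 * n : ℕ) : ℝ)) ^ (Real.log (∏ i, (m i : ℝ)) / Real.log m0) := by
  intro n hn
  obtain ⟨⟨i0, hi0⟩, hlb⟩ := hm0
  have hm0_2 : 2 ≤ m0 := hi0 ▸ hm i0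
  set k := Nat.clog m0 n with hkdef
  have hk1 : n ≤ m0 ^ k := Nat.le_pow_clog (by omega) n
  have hk2 : m0 ^ k ≤ m0 * n := by
    rcases Nat.eq_zero_or_pos k with h0 | hpos
    · rw [h0]; simpa using Nat.one_le_iff_ne_zero.mpr (by positivity)
    · obtain ⟨j, hkj⟩ : ∃ j, k = j + 1 := ⟨k - 1, by omega⟩
      have hn2 : 2 ≤ n := by
        by_contra h
        have : n = 1 := by omega
        simp [hkdef, this, Nat.clog_one_right] at hpos
      have hlt : m0 ^ j < n := by
        have := Nat.pow_pred_clog_lt_self (by omega : 1 < m0) hn2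
        rw [← hkdef, hkj] at this
        simpa using this
      calc m0 ^ k = m0 * m0 ^ j := by rw [hkj]; ring
        _ ≤ m0 * n := Nat.mul_le_mul_left m0 hlt.le
  have hmik : ∀ i, n ≤ m i ^ k := fun i =>
    hk1.trans (Nat.pow_le_pow_left (hlb ⟨i, rfl⟩) k)
  -- the encoding map
  set f : (((Fin d → Fin 2) → A) × (∀ i, Fin (m i ^ k))) → ((Fin d → Fin n) → A) :=
    fun Yo p => subIter m Sb k
      (Yo.1 (fun i => if ((p i : ℕ)) < ((Yo.2 i : ℕ)) then 1 else 0))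
      (fun i => if ((p i : ℕ)) < ((Yo.2 i : ℕ)) then (p i : ℕ) + m i ^ k - (Yo.2 i : ℕ)
        else (p i : ℕ) - (Yo.2 i : ℕ)) with hfdef
  have hrange : langE X₀ n ⊆ Set.range f := by
    rintro w ⟨x, hx, hxw⟩
    obtain ⟨y, o, ho, heq⟩ := hhier x hx k
    have hoc : ∀ i, (o i).toNat < m i ^ k := by
      intro i
      have h2 : o i < ((m i ^ k : ℕ) : ℤ) := by push_cast; exact (ho i).2
      have h3 := hmik i
      omega
    refine ⟨⟨fun v => y (fun i => if v i = 1 then -1 else 0),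
            fun i => ⟨(o i).toNat, hoc i⟩⟩, ?_⟩
    funext p
    set j : Fin d → ℤ := fun i => if ((p i : ℕ)) < (o i).toNat then -1 else 0 with hjdef
    set s : Fin d → ℕ := fun i =>
      if ((p i : ℕ)) < (o i).toNat then (p i : ℕ) + m i ^ k - (o i).toNat
      else (p i : ℕ) - (o i).toNat with hsdef
    have hs : ∀ i, s i < m i ^ k := by
      intro i
      have h1 : (p i : ℕ) < n := (p i).2
      have h2 := hmik i
      simp only [hsdef]
      split <;> omega
    have hcoord : (fun i => o i + j i * (m i : ℤ) ^ k + (s i : ℤ))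
        = (fun i => (((p i : ℕ) : ℤ))) := by
      funext i
      have hcast : ((m i : ℤ)) ^ k = ((m i ^ k : ℕ) : ℤ) := by push_cast; ring
      have honn := (ho i).1
      have hio : o i = ((o i).toNat : ℤ) := (Int.toNat_of_nonneg honn).symm
      have h1 : (p i : ℕ) < n := (p i).2
      have h2 := hmik i
      have h3 := hoc i
      have h4 := hn
      simp only [hjdef, hsdef]
      split <;> rw [hcast, hio] <;> omega
    show f _ p = w p
    rw [hfdef]
    have hjv : (fun i => if (if ((p i : ℕ)) < (o i).toNat then (1 : Fin 2) else 0) = 1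
        then (-1 : ℤ) else 0) = j := by
      funext i
      simp only [hjdef]
      by_cases hcase : ((p i : ℕ)) < (o i).toNat <;> simp [hcase]
    show subIter m Sb k
        (y (fun i => if (if ((p i : ℕ)) < (o i).toNat then (1 : Fin 2) else 0) = 1
          then (-1 : ℤ) else 0))
        (fun i => if ((p i : ℕ)) < (o i).toNat then (p i : ℕ) + m i ^ k - (o i).toNat
          else (p i : ℕ) - (o i).toNat) = w p
    rw [hjv, ← hsdef, ← heq j s hs, hcoord]
    exact hxw p
  -- counting
  have hcard : (langE X₀ n).ncard ≤ Fintype.card A ^ 2 ^ d * ∏ i, m i ^ k := by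
    calc (langE X₀ n).ncard ≤ (Set.range f).ncard :=
          Set.ncard_le_ncard hrange (Set.toFinite _)
      _ = (f '' Set.univ).ncard := by rw [Set.image_univ]
      _ ≤ (Set.univ : Set (((Fin d → Fin 2) → A) × (∀ i, Fin (m i ^ k)))).ncard :=
          Set.ncard_image_le (Set.toFinite _)
      _ = Nat.card (((Fin d → Fin 2) → A) × (∀ i, Fin (m i ^ k))) := Set.ncard_univ _
      _ = Fintype.card A ^ 2 ^ d * ∏ i, m i ^ k := by
          simp [Nat.card_eq_fintype_card, Fintype.card_fun, Fintype.card_pi]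
  -- real estimate
  have hQ0 : 0 ≤ Real.log (∏ i, (m i : ℝ)) / Real.log m0 := by
    apply div_nonneg
    · apply Real.log_nonneg
      have h0 : (1:ℕ) ≤ ∏ i, m i := Finset.one_le_prod' fun i _ => by have := hm i; omega
      exact_mod_cast h0
    · exact Real.log_nonneg (by exact_mod_cast (by omega : 1 ≤ m0))
  have hprod : ((∏ i, m i ^ k : ℕ) : ℝ) ≤
      (((m0 * n : ℕ) : ℝ)) ^ (Real.log (∏ i, (m i : ℝ)) / Real.log m0) := by
    have hPpos : (0:ℝ) < ∏ i, (m i : ℝ) :=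
      Finset.prod_pos fun i _ => by have := hm i; exact_mod_cast (by omega : 0 < m i)
    have hm0pos : (0:ℝ) < (m0 : ℝ) := by exact_mod_cast (by omega : 0 < m0)
    have hlogpos : 0 < Real.log (m0 : ℝ) := Real.log_pos (by exact_mod_cast hm0_2)
    set Q : ℝ := Real.log (∏ i, (m i : ℝ)) / Real.log m0 with hQ
    have key : ((∏ i, m i ^ k : ℕ) : ℝ) = (((m0 ^ k : ℕ)) : ℝ) ^ Q := by
      have hA : ((∏ i, m i ^ k : ℕ) : ℝ) = (∏ i, (m i : ℝ)) ^ (k : ℕ) := by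
        push_cast
        exact Finset.prod_pow _ _ _
      have hB : (((m0 ^ k : ℕ)) : ℝ) = (m0 : ℝ) ^ (k : ℕ) := by push_cast; ring
      rw [hA, hB, ← Real.rpow_natCast (m0:ℝ) k, ← Real.rpow_mul hm0pos.le,
        Real.rpow_def_of_pos hm0pos]
      have e2 : Real.log (m0:ℝ) * ((k:ℝ) * Q) = Real.log ((∏ i, (m i : ℝ)) ^ (k:ℕ)) := by
        rw [Real.log_pow, hQ]
        field_simp
      rw [e2, Real.exp_log (pow_pos hPpos k)]
    rw [key]
    exact Real.rpow_le_rpow (by positivity) (by exact_mod_cast hk2) hQ0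
  calc ((langE X₀ n).ncard : ℝ) ≤ ((Fintype.card A ^ 2 ^ d * ∏ i, m i ^ k : ℕ) : ℝ) := by
        exact_mod_cast hcard
    _ = (Fintype.card A : ℝ) ^ (2^d) * ((∏ i, m i ^ k : ℕ) : ℝ) := by push_cast; ring
    _ ≤ _ := by
        apply mul_le_mul_of_nonneg_left hprod (by positivity)

end Freezing
end

section
/- Let Φ be a shift-invariant interaction on X = 𝒜^(ℤ^d) with ‖Φ‖_𝒮 = Σ_{Λ finite, 0 ∈ Λ} ‖Φ_Λ‖_∞ < ∞, and let μ be a Borel probability measure on X satisfying the DLR equations: for every finite Λ ⊂ ℤ^d and every Borel set B ⊆ X, μ(B) = ∫ Σ_{w : Λ → 𝒜} γ_Λ(w|y) 1_B(w ∨ y|_{Λᶜ}) dμ(y). Then, with ρ = |𝒜|^{−1} e^{−2‖Φ‖_𝒮}, for every x ∈ X and every n ≥ 1 one has μ({ y ∈ X : y|_{B_n} = x|_{B_n} }) ≥ ρ^{(2n+1)^d}. -/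
open MeasureTheory Filter Topology
open scoped ENNReal Classical

namespace Freezing

section Gibbs

variable {d : ℕ} {A : Type} [Fintype A] [TopologicalSpace A] [DiscreteTopology A]
  [MeasurableSpace A] [BorelSpace A]

/-- The configuration equal to `w` on `Λ` and to `y` off `Λ`. -/
def patch (Λ : Finset (Fin d → ℤ)) (w : {m : Fin d → ℤ // m ∈ Λ} → A) (y : Cfg d A) :
    Cfg d A :=
  fun m => if h : m ∈ Λ then w ⟨m, h⟩ else y m

/-- The energy `U_Λ(w|y) = Σ_{Λ' ∩ Λ ≠ ∅} Φ_{Λ'}(w ∨ y|_{Λᶜ})`. -/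
noncomputable def energy (Φ : Finset (Fin d → ℤ) → Cfg d A → ℝ)
    (Λ : Finset (Fin d → ℤ)) (w : {m : Fin d → ℤ // m ∈ Λ} → A) (y : Cfg d A) : ℝ :=
  ∑' Λ' : {Λ' : Finset (Fin d → ℤ) // (Λ' ∩ Λ).Nonempty}, Φ Λ'.1 (patch Λ w y)

/-- The partition function `Z_Λ(y)`. -/
noncomputable def partFun (Φ : Finset (Fin d → ℤ) → Cfg d A → ℝ)
    (Λ : Finset (Fin d → ℤ)) (y : Cfg d A) : ℝ :=
  ∑ w : {m : Fin d → ℤ // m ∈ Λ} → A, Real.exp (energy Φ Λ w y)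

/-- The Gibbsian specification `γ_Λ(w|y) = e^{U_Λ(w|y)} / Z_Λ(y)`. -/
noncomputable def gibbsSpec (Φ : Finset (Fin d → ℤ) → Cfg d A → ℝ)
    (Λ : Finset (Fin d → ℤ)) (w : {m : Fin d → ℤ // m ∈ Λ} → A) (y : Cfg d A) : ℝ :=
  Real.exp (energy Φ Λ w y) / partFun Φ Λ y

/-- The norm `‖Φ‖_𝒮 = Σ_{Λ ∋ 0} ‖Φ_Λ‖_∞`. -/
noncomputable def normS (Φ : Finset (Fin d → ℤ) → Cfg d A → ℝ) : ℝ :=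
  ∑' Λ : {Λ : Finset (Fin d → ℤ) // (0 : Fin d → ℤ) ∈ Λ}, ⨆ x : Cfg d A, |Φ Λ.1 x|

end Gibbs

/-!
Every finite `Λ'` meeting `Λ` is the translate, by a point of `Λ`, of a finite set containing the
origin, so shift-invariance gives `|U_Λ(w|y)| ≤ |Λ| ‖Φ‖_𝒮`. Hence `γ_Λ(w|y)` is at least
`e^{-|Λ| ‖Φ‖_𝒮} / (|𝒜|^{|Λ|} e^{|Λ| ‖Φ‖_𝒮}) = ρ^{|Λ|}`, uniformly in the boundary condition `y`,
and the DLR equation for the cylinder of `x` on `Λ` averages this bound over `y`.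
-/

section Interaction

variable {d : ℕ} {A : Type}

lemma shift_surjective (n : Fin d → ℤ) : Function.Surjective (shift n : Cfg d A → Cfg d A) :=
  fun x => ⟨shift (-n) x, funext fun m => by simp [shift]⟩

lemma iSup_abs_image_add {Φ : Finset (Fin d → ℤ) → Cfg d A → ℝ}
    (hcov : ∀ (Λ : Finset (Fin d → ℤ)) (n : Fin d → ℤ) (x : Cfg d A),
      Φ (Λ.image (fun k => k + n)) x = Φ Λ (shift n x))
    (Λ : Finset (Fin d → ℤ)) (n : Fin d → ℤ) :
    ⨆ x, |Φ (Λ.image (fun k => k + n)) x| = ⨆ x, |Φ Λ x| := by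
  simp_rw [hcov]
  exact (shift_surjective n).iSup_comp fun x => |Φ Λ x|

lemma exists_injective_translate_to_origin (Λ : Finset (Fin d → ℤ)) :
    ∃ ι : {Λ' : Finset (Fin d → ℤ) // (Λ' ∩ Λ).Nonempty} →
        {m // m ∈ Λ} × {Λ₀ : Finset (Fin d → ℤ) // (0 : Fin d → ℤ) ∈ Λ₀},
      Function.Injective ι ∧ ∀ Λ', (ι Λ').2.1.image (fun k => k + (ι Λ').1.1) = Λ'.1 := by
  choose p hp using fun Λ' : {Λ' : Finset (Fin d → ℤ) // (Λ' ∩ Λ).Nonempty} => Λ'.2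
  simp only [Finset.mem_inter] at hp
  let ι : {Λ' : Finset (Fin d → ℤ) // (Λ' ∩ Λ).Nonempty} →
      {m // m ∈ Λ} × {Λ₀ : Finset (Fin d → ℤ) // (0 : Fin d → ℤ) ∈ Λ₀} := fun Λ' =>
    (⟨p Λ', (hp Λ').2⟩,
      ⟨Λ'.1.image (fun k => k - p Λ'), Finset.mem_image.mpr ⟨p Λ', (hp Λ').1, sub_self _⟩⟩)
  have hrecover : ∀ Λ', (ι Λ').2.1.image (fun k => k + (ι Λ').1.1) = Λ'.1 := fun Λ' => by
    simp [ι, Finset.image_image, Function.comp_def]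
  exact ⟨ι, fun a b hab => Subtype.ext (by rw [← hrecover a, ← hrecover b, hab]), hrecover⟩

lemma continuous_patch [TopologicalSpace A] (Λ : Finset (Fin d → ℤ))
    (w : {m : Fin d → ℤ // m ∈ Λ} → A) :
    Continuous (patch Λ w) := by
  refine continuous_pi fun m => ?_
  by_cases hm : m ∈ Λ
  · simpa only [patch, dif_pos hm] using continuous_const
  · simpa only [patch, dif_neg hm] using continuous_apply m

variable {Φ : Finset (Fin d → ℤ) → Cfg d A → ℝ}
  (hcov : ∀ (Λ : Finset (Fin d → ℤ)) (n : Fin d → ℤ) (x : Cfg d A),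
    Φ (Λ.image (fun k => k + n)) x = Φ Λ (shift n x))
  (hsum : Summable fun Λ : {Λ : Finset (Fin d → ℤ) // (0 : Fin d → ℤ) ∈ Λ} =>
    ⨆ x : Cfg d A, |Φ Λ.1 x|)
include hcov hsum

lemma summable_iSup_abs_of_inter_nonempty_and_tsum_le (Λ : Finset (Fin d → ℤ)) :
    (Summable fun Λ' : {Λ' : Finset (Fin d → ℤ) // (Λ' ∩ Λ).Nonempty} =>
      ⨆ x : Cfg d A, |Φ Λ'.1 x|) ∧
    ∑' Λ' : {Λ' : Finset (Fin d → ℤ) // (Λ' ∩ Λ).Nonempty}, ⨆ x : Cfg d A, |Φ Λ'.1 x| ≤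
      Λ.card * normS Φ := by
  obtain ⟨ι, hι, hrecover⟩ := exists_injective_translate_to_origin Λ
  set h : {m // m ∈ Λ} × {Λ₀ : Finset (Fin d → ℤ) // (0 : Fin d → ℤ) ∈ Λ₀} → ℝ :=
    fun p => ⨆ x : Cfg d A, |Φ p.2.1 x|
  have h_nonneg : 0 ≤ h := fun p => Real.iSup_nonneg fun _ => abs_nonneg _
  have h_summable : Summable h :=
    (summable_prod_of_nonneg h_nonneg).mpr ⟨fun _ => hsum, Summable.of_finite⟩
  have h_tsum : ∑' p, h p = Λ.card * normS Φ := by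
    rw [h_summable.tsum_prod' fun _ => hsum, tsum_fintype]
    simp only [h, Finset.sum_const, Finset.card_univ, Fintype.card_coe, nsmul_eq_mul]
    rfl
  have h_comp : (fun Λ' : {Λ' : Finset (Fin d → ℤ) // (Λ' ∩ Λ).Nonempty} =>
      ⨆ x : Cfg d A, |Φ Λ'.1 x|) = h ∘ ι := funext fun Λ' => by
    simp only [h, Function.comp_apply]
    conv_lhs => rw [← hrecover Λ']
    exact iSup_abs_image_add hcov _ _
  refine ⟨h_comp ▸ h_summable.comp_injective hι, h_tsum ▸ ?_⟩
  rw [h_comp]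
  exact Summable.tsum_le_tsum_of_inj ι hι (fun p _ => h_nonneg p) (fun _ => le_rfl)
    (h_summable.comp_injective hι) h_summable

variable [TopologicalSpace A] [Fintype A] (hcont : ∀ Λ, Continuous (Φ Λ))
include hcont

omit hcov hsum in
lemma abs_le_iSup_abs (Λ : Finset (Fin d → ℤ)) (x : Cfg d A) : |Φ Λ x| ≤ ⨆ y, |Φ Λ y| :=
  le_ciSup (isCompact_range (hcont Λ).abs).bddAbove x

lemma abs_energy_le (Λ : Finset (Fin d → ℤ)) (w : {m : Fin d → ℤ // m ∈ Λ} → A) (y : Cfg d A) :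
    |energy Φ Λ w y| ≤ Λ.card * normS Φ := by
  obtain ⟨h_summable, h_le⟩ := summable_iSup_abs_of_inter_nonempty_and_tsum_le hcov hsum Λ
  rw [← Real.norm_eq_abs]
  exact (tsum_of_norm_bounded h_summable.hasSum
    fun Λ' => (Real.norm_eq_abs _).trans_le (abs_le_iSup_abs hcont Λ'.1 (patch Λ w y))).trans h_le

lemma continuous_energy (Λ : Finset (Fin d → ℤ)) (w : {m : Fin d → ℤ // m ∈ Λ} → A) :
    Continuous (energy Φ Λ w) :=
  continuous_tsum (fun Λ' => (hcont Λ'.1).comp (continuous_patch Λ w))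
    (summable_iSup_abs_of_inter_nonempty_and_tsum_le hcov hsum Λ).1
    fun Λ' y => abs_le_iSup_abs hcont Λ'.1 (patch Λ w y)

lemma continuous_gibbsSpec [Nonempty A] (Λ : Finset (Fin d → ℤ))
    (w : {m : Fin d → ℤ // m ∈ Λ} → A) : Continuous (gibbsSpec Φ Λ w) :=
  (continuous_energy hcov hsum hcont Λ w).rexp.div
    (continuous_finsetSum _ fun w' _ => (continuous_energy hcov hsum hcont Λ w').rexp)
    fun _ => (Finset.sum_pos (fun _ _ => Real.exp_pos _) Finset.univ_nonempty).ne'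

end Interaction

section Specification

variable {d : ℕ} {A : Type} [Fintype A] [Nonempty A] {Φ : Finset (Fin d → ℤ) → Cfg d A → ℝ}

lemma exp_neg_two_mul_div_le_gibbsSpec {Λ : Finset (Fin d → ℤ)} {y : Cfg d A} {c : ℝ}
    (hc : ∀ w, |energy Φ Λ w y| ≤ c) (w : {m : Fin d → ℤ // m ∈ Λ} → A) :
    Real.exp (-2 * c) / Fintype.card A ^ Λ.card ≤ gibbsSpec Φ Λ w y := by
  have hZ_pos : 0 < partFun Φ Λ y :=
    Finset.sum_pos (fun _ _ => Real.exp_pos _) Finset.univ_nonempty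
  have hZ_le : partFun Φ Λ y ≤ Fintype.card A ^ Λ.card * Real.exp c := by
    calc partFun Φ Λ y ≤ ∑ _w : {m : Fin d → ℤ // m ∈ Λ} → A, Real.exp c :=
          Finset.sum_le_sum fun w _ => Real.exp_le_exp.mpr (abs_le.mp (hc w)).2
      _ = Fintype.card A ^ Λ.card * Real.exp c := by simp
  calc Real.exp (-2 * c) / Fintype.card A ^ Λ.card
      = Real.exp (-c) / (Fintype.card A ^ Λ.card * Real.exp c) := by
        rw [mul_comm, ← div_div, div_right_comm, ← Real.exp_sub]
        ring_nf
    _ ≤ gibbsSpec Φ Λ w y :=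
        div_le_div₀ (Real.exp_pos _).le (Real.exp_le_exp.mpr (abs_le.mp (hc w)).1) hZ_pos hZ_le

end Specification

section Cylinder

variable {d : ℕ} {A : Type}

def cylinder (Λ : Finset (Fin d → ℤ)) (x : Cfg d A) : Set (Cfg d A) := {y | ∀ m ∈ Λ, y m = x m}

lemma measurableSet_cylinder [MeasurableSpace A] [MeasurableSingletonClass A]
    (Λ : Finset (Fin d → ℤ)) (x : Cfg d A) : MeasurableSet (cylinder Λ x) := by
  have : cylinder Λ x = ⋂ m ∈ Λ, (fun y : Cfg d A => y m) ⁻¹' {x m} := by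
    ext y; simp [cylinder]
  rw [this]
  exact Finset.measurableSet_biInter Λ fun m _ => measurable_pi_apply m (measurableSet_singleton _)

lemma patch_mem_cylinder_iff {Λ : Finset (Fin d → ℤ)} {w : {m : Fin d → ℤ // m ∈ Λ} → A}
    {x y : Cfg d A} : patch Λ w y ∈ cylinder Λ x ↔ w = fun m => x m.1 := by
  simp only [cylinder, Set.mem_ofPred_eq, funext_iff, Subtype.forall]
  refine forall₂_congr fun m hm => ?_
  simp [patch, hm]

lemma sum_mul_indicator_cylinder_patch [Fintype A] (Λ : Finset (Fin d → ℤ))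
    (f : ({m : Fin d → ℤ // m ∈ Λ} → A) → ℝ) (x y : Cfg d A) :
    ∑ w, f w * (cylinder Λ x).indicator (fun _ => (1 : ℝ)) (patch Λ w y) = f fun m => x m.1 := by
  simp only [Set.indicator_apply, patch_mem_cylinder_iff, mul_ite, mul_one, mul_zero]
  exact Fintype.sum_ite_eq' _ f

end Cylinder

lemma pow_card_le_measure_cylinder {d : ℕ} {A : Type} [Fintype A] [Nonempty A]
    [TopologicalSpace A] [DiscreteTopology A] [MeasurableSpace A] [BorelSpace A]
    {Φ : Finset (Fin d → ℤ) → Cfg d A → ℝ} (hcont : ∀ Λ, Continuous (Φ Λ))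
    (hcov : ∀ (Λ : Finset (Fin d → ℤ)) (n : Fin d → ℤ) (x : Cfg d A),
      Φ (Λ.image (fun k => k + n)) x = Φ Λ (shift n x))
    (hsum : Summable fun Λ : {Λ : Finset (Fin d → ℤ) // (0 : Fin d → ℤ) ∈ Λ} =>
      ⨆ x : Cfg d A, |Φ Λ.1 x|)
    (μ : Measure (Cfg d A)) [IsProbabilityMeasure μ] (Λ : Finset (Fin d → ℤ))
    (hDLR : ∀ B : Set (Cfg d A), MeasurableSet B →
      (μ B).toReal = ∫ y, (∑ w : {m : Fin d → ℤ // m ∈ Λ} → A,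
        gibbsSpec Φ Λ w y * Set.indicator B (fun _ => (1 : ℝ)) (patch Λ w y)) ∂μ)
    (x : Cfg d A) :
    ((Fintype.card A : ℝ)⁻¹ * Real.exp (-2 * normS Φ)) ^ Λ.card ≤ (μ (cylinder Λ x)).toReal := by
  have hγ : ∀ y, ((Fintype.card A : ℝ)⁻¹ * Real.exp (-2 * normS Φ)) ^ Λ.card ≤
      gibbsSpec Φ Λ (fun m => x m.1) y := fun y => by
    convert exp_neg_two_mul_div_le_gibbsSpec (c := Λ.card * normS Φ)
      (fun w => abs_energy_le hcov hsum hcont Λ w y) _ using 1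
    rw [mul_pow, inv_pow, ← Real.exp_nat_mul, inv_mul_eq_div]
    ring_nf
  have hγ_int : Integrable (gibbsSpec Φ Λ fun m => x m.1) μ :=
    (continuous_gibbsSpec hcov hsum hcont Λ _).integrable_of_hasCompactSupport
      (HasCompactSupport.of_compactSpace _)
  calc ((Fintype.card A : ℝ)⁻¹ * Real.exp (-2 * normS Φ)) ^ Λ.card
      = ∫ _, ((Fintype.card A : ℝ)⁻¹ * Real.exp (-2 * normS Φ)) ^ Λ.card ∂μ := by simp
    _ ≤ ∫ y, gibbsSpec Φ Λ (fun m => x m.1) y ∂μ := integral_mono (integrable_const _) hγ_int hγ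
    _ = (μ (cylinder Λ x)).toReal := by
        simp only [hDLR _ (measurableSet_cylinder Λ x), sum_mul_indicator_cylinder_patch]

noncomputable def box (d n : ℕ) : Finset (Fin d → ℤ) :=
  Fintype.piFinset fun _ => Finset.Icc (-(n : ℤ)) n

lemma mem_box {d n : ℕ} {m : Fin d → ℤ} : m ∈ box d n ↔ ∀ i, |m i| ≤ (n : ℤ) := by
  simp [box, abs_le]

lemma card_box (d n : ℕ) : (box d n).card = (2 * n + 1) ^ d := by
  simp only [box, Fintype.card_piFinset, Int.card_Icc, Finset.prod_const, Finset.card_univ,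
    Fintype.card_fin]
  congr 1
  omega

theorem statement17_general (d : ℕ) (A : Type) [Fintype A] [Nonempty A]
    [TopologicalSpace A] [DiscreteTopology A] [MeasurableSpace A] [BorelSpace A]
    (Φ : Finset (Fin d → ℤ) → Cfg d A → ℝ)
    (hcont : ∀ Λ, Continuous (Φ Λ))
    (hcov : ∀ (Λ : Finset (Fin d → ℤ)) (n : Fin d → ℤ) (x : Cfg d A),
      Φ (Λ.image (fun k => k + n)) x = Φ Λ (shift n x))
    (hsum : Summable fun Λ : {Λ : Finset (Fin d → ℤ) // (0 : Fin d → ℤ) ∈ Λ} =>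
      ⨆ x : Cfg d A, |Φ Λ.1 x|)
    (μ : Measure (Cfg d A)) (hμ : IsProbabilityMeasure μ)
    (hDLR : ∀ (Λ : Finset (Fin d → ℤ)) (B : Set (Cfg d A)), MeasurableSet B →
      (μ B).toReal = ∫ y, (∑ w : {m : Fin d → ℤ // m ∈ Λ} → A,
        gibbsSpec Φ Λ w y * Set.indicator B (fun _ => (1 : ℝ)) (patch Λ w y)) ∂μ) :
    ∀ (x : Cfg d A) (n : ℕ), 1 ≤ n →
      ((Fintype.card A : ℝ)⁻¹ * Real.exp (-2 * normS Φ)) ^ ((2 * n + 1) ^ d) ≤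
        (μ { y : Cfg d A | ∀ m : Fin d → ℤ, (∀ i, |m i| ≤ (n : ℤ)) → y m = x m }).toReal := by
  intro x n _
  have hcyl : { y : Cfg d A | ∀ m : Fin d → ℤ, (∀ i, |m i| ≤ (n : ℤ)) → y m = x m } =
      cylinder (box d n) x := by
    simp only [cylinder, mem_box]
  rw [hcyl, ← card_box]
  exact pow_card_le_measure_cylinder hcont hcov hsum μ _ (hDLR _) x

/-- If `Φ` is an absolutely summable shift-invariant interaction and `μ`
satisfies the DLR equations for the Gibbsian specification of `Φ`, then every cylinder on
`B_n = ([-n,n] ∩ ℤ)^d` has `μ`-measure at least `ρ^{(2n+1)^d}` with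
`ρ = |𝒜|⁻¹ e^{-2‖Φ‖_𝒮}`. -/
theorem statement17 (d : ℕ) (hd : 1 ≤ d) (A : Type) [Fintype A] [Nonempty A]
    [TopologicalSpace A] [DiscreteTopology A] [MeasurableSpace A] [BorelSpace A]
    (Φ : Finset (Fin d → ℤ) → Cfg d A → ℝ)
    (hcont : ∀ Λ, Continuous (Φ Λ))
    (hloc : ∀ (Λ : Finset (Fin d → ℤ)) (x y : Cfg d A),
      (∀ m ∈ Λ, x m = y m) → Φ Λ x = Φ Λ y)
    (hcov : ∀ (Λ : Finset (Fin d → ℤ)) (n : Fin d → ℤ) (x : Cfg d A),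
      Φ (Λ.image (fun k => k + n)) x = Φ Λ (shift n x))
    (hsum : Summable fun Λ : {Λ : Finset (Fin d → ℤ) // (0 : Fin d → ℤ) ∈ Λ} =>
      ⨆ x : Cfg d A, |Φ Λ.1 x|)
    (μ : Measure (Cfg d A)) (hμ : IsProbabilityMeasure μ)
    (hDLR : ∀ (Λ : Finset (Fin d → ℤ)) (B : Set (Cfg d A)), MeasurableSet B →
      (μ B).toReal = ∫ y, (∑ w : {m : Fin d → ℤ // m ∈ Λ} → A,
        gibbsSpec Φ Λ w y * Set.indicator B (fun _ => (1 : ℝ)) (patch Λ w y)) ∂μ) :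
    ∀ (x : Cfg d A) (n : ℕ), 1 ≤ n →
      ((Fintype.card A : ℝ)⁻¹ * Real.exp (-2 * normS Φ)) ^ ((2 * n + 1) ^ d) ≤
        (μ { y : Cfg d A | ∀ m : Fin d → ℤ, (∀ i, |m i| ≤ (n : ℤ)) → y m = x m }).toReal :=
  statement17_general d A Φ hcont hcov hsum μ hμ hDLR

end Freezing
end

section
/- Let (q_j)_{j≥1} be a sequence of nonnegative reals with Σ_{j≥1} q_j = 1. Then Σ_{j≥1} q_j log(1/q_j) ≤ 2 Σ_{j≥1} q_j log j + 1, where both sides are sums of nonnegative terms taken in [0, +∞] and q log(1/q) is interpreted as 0 when q = 0. -/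
open scoped ENNReal

/-!
Writing `q log(1/q) = 2 q log n + negMulLog (n² q) / n²` and using `negMulLog ≤ e⁻¹` on `[0, ∞)`
gives the pointwise bound `q log(1/q) ≤ 2 q log n + e⁻¹ / n²`, and `e⁻¹ Σ 1/n² = π²/(6e) ≤ 1`.
-/

namespace Real

lemma negMulLog_le_exp_neg_one {x : ℝ} (hx : 0 ≤ x) : negMulLog x ≤ exp (-1) := by
  rcases hx.eq_or_lt with rfl | hx
  · simp [(exp_pos _).le]
  have hlog : -log x ≤ x⁻¹ * exp (-1) := by
    simpa [exp_sub, exp_neg, exp_log hx, div_eq_mul_inv] using add_one_le_exp (-log x - 1)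
  calc negMulLog x = x * -log x := by rw [negMulLog, neg_mul, mul_neg]
    _ ≤ x * (x⁻¹ * exp (-1)) := by gcongr
    _ = exp (-1) := by field_simp

lemma mul_log_one_div_le {q n : ℝ} (hq : 0 ≤ q) (hn : 0 < n) :
    q * log (1 / q) ≤ 2 * (q * log n) + exp (-1) / n ^ 2 := by
  rcases hq.eq_or_lt with rfl | hq
  · simp only [zero_mul, mul_zero, zero_add]
    positivity
  have hsplit : q * log (1 / q) = 2 * (q * log n) + negMulLog (n ^ 2 * q) / n ^ 2 := by
    rw [negMulLog, log_mul (by positivity) hq.ne', log_pow, one_div, log_inv]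
    field_simp
    push_cast
    ring
  rw [hsplit]
  gcongr
  exact negMulLog_le_exp_neg_one (by positivity)

lemma hasSum_one_div_succ_sq :
    HasSum (fun n : ℕ => 1 / ((n + 1 : ℕ) : ℝ) ^ 2) (π ^ 2 / 6) := by
  simpa using (hasSum_nat_add_iff' 1).mpr hasSum_zeta_two

end Real

open Real in
lemma tsum_ofReal_exp_neg_one_div_succ_sq_le_one :
    ∑' n : ℕ, ENNReal.ofReal (exp (-1) / ((n + 1 : ℕ) : ℝ) ^ 2) ≤ 1 := by
  have hsum : HasSum (fun n : ℕ => exp (-1) / ((n + 1 : ℕ) : ℝ) ^ 2) (exp (-1) * (π ^ 2 / 6)) := by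
    simpa only [mul_one_div] using hasSum_one_div_succ_sq.mul_left (exp (-1))
  rw [← ENNReal.ofReal_tsum_of_nonneg (fun n => by positivity) hsum.summable, hsum.tsum_eq,
    ← ENNReal.ofReal_one]
  apply ENNReal.ofReal_le_ofReal
  have hpi : π ^ 2 / 6 ≤ 2 := by nlinarith [pi_lt_d2, pi_pos]
  have he : 2 ≤ exp 1 := by linarith [add_one_le_exp 1]
  rw [exp_neg, inv_mul_le_iff₀ (exp_pos 1), mul_one]
  linarith

theorem statement18_general (q : ℕ → ℝ) (hq : ∀ j : ℕ, 1 ≤ j → 0 ≤ q j) :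
    ∑' j : ℕ, ENNReal.ofReal (q (j + 1) * Real.log (1 / q (j + 1))) ≤
      2 * (∑' j : ℕ, ENNReal.ofReal (q (j + 1) * Real.log ((j + 1 : ℕ) : ℝ))) + 1 := by
  have hpointwise : ∀ j : ℕ, ENNReal.ofReal (q (j + 1) * Real.log (1 / q (j + 1))) ≤
      2 * ENNReal.ofReal (q (j + 1) * Real.log ((j + 1 : ℕ) : ℝ)) +
        ENNReal.ofReal (Real.exp (-1) / ((j + 1 : ℕ) : ℝ) ^ 2) := fun j =>
    calc _ ≤ ENNReal.ofReal (2 * (q (j + 1) * Real.log ((j + 1 : ℕ) : ℝ)) +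
          Real.exp (-1) / ((j + 1 : ℕ) : ℝ) ^ 2) :=
        ENNReal.ofReal_le_ofReal
          (Real.mul_log_one_div_le (hq (j + 1) j.succ_pos) (by positivity))
      _ ≤ _ := by
        grw [ENNReal.ofReal_add_le, ENNReal.ofReal_mul zero_le_two, ENNReal.ofReal_ofNat]
  calc _ ≤ ∑' j : ℕ, (2 * ENNReal.ofReal (q (j + 1) * Real.log ((j + 1 : ℕ) : ℝ)) +
          ENNReal.ofReal (Real.exp (-1) / ((j + 1 : ℕ) : ℝ) ^ 2)) :=
        ENNReal.tsum_le_tsum hpointwise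
    _ = 2 * (∑' j : ℕ, ENNReal.ofReal (q (j + 1) * Real.log ((j + 1 : ℕ) : ℝ))) +
          ∑' j : ℕ, ENNReal.ofReal (Real.exp (-1) / ((j + 1 : ℕ) : ℝ) ^ 2) := by
        rw [ENNReal.tsum_add, ENNReal.tsum_mul_left]
    _ ≤ _ := by grw [tsum_ofReal_exp_neg_one_div_succ_sq_le_one]

/-- **entropy estimate for the first-return-time partition.** If the
nonnegative reals `q_j` (for `j ≥ 1`) sum to `1`, then
`Σ_{j ≥ 1} q_j log(1/q_j) ≤ 2 Σ_{j ≥ 1} q_j log j + 1`, both series being sums of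
nonnegative terms computed in `[0, ∞]`. -/
theorem statement18 (q : ℕ → ℝ) (hq : ∀ j : ℕ, 1 ≤ j → 0 ≤ q j)
    (hsum : HasSum (fun j : ℕ => q (j + 1)) 1) :
    ∑' j : ℕ, ENNReal.ofReal (q (j + 1) * Real.log (1 / q (j + 1))) ≤
      2 * (∑' j : ℕ, ENNReal.ofReal (q (j + 1) * Real.log ((j + 1 : ℕ) : ℝ))) + 1 :=
  statement18_general q hq
end
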